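/- Let r ∈ ℂ with Re(r) > 0. Then the partial derivative of A_D(α;γ) with respect to α, evaluated at α = γ = r, equals A_D'(r;r) = Σ_{P monic irreducible} log|P| / ( (|P|^{1+2r} − 1)(|P| + 1) ), the series converging absolutely. -/

import Mathlib

/-- The local factor of the Euler product
`A_D(α;γ) = ∏_P (1−|P|^{-(1+α+γ)})⁻¹(1 − 1/((|P|+1)|P|^{1+2α}) − 1/((|P|+1)|P|^{α+γ}))`,
with `|P|^w = exp(w·deg P·log q)`. -/
noncomputable def ADlocal (Fq : Type*) [Field Fq] [Fintype Fq] (a g : ℂ)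
    (P : Polynomial Fq) : ℂ :=
  (1 - Complex.exp (-(1 + a + g) * ((P.natDegree : ℂ) * Real.log (Fintype.card Fq))))⁻¹ *
    (1 - ((((Fintype.card Fq : ℝ) ^ P.natDegree : ℝ) : ℂ) + 1)⁻¹ *
        Complex.exp (-(1 + 2 * a) * ((P.natDegree : ℂ) * Real.log (Fintype.card Fq))) -
      ((((Fintype.card Fq : ℝ) ^ P.natDegree : ℝ) : ℂ) + 1)⁻¹ *
        Complex.exp (-(a + g) * ((P.natDegree : ℂ) * Real.log (Fintype.card Fq))))

/-- The Euler product `A_D(α;γ)`. -/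
noncomputable def AD (Fq : Type*) [Field Fq] [Fintype Fq] (a g : ℂ) : ℂ :=
  ∏' P : {P : Polynomial Fq // P.Monic ∧ Irreducible P}, ADlocal Fq a g P.1

/-!
Each Euler factor depends on `P` only through `t = log|P|`; at `α = γ = r` it equals `1`, and on
the half-plane `Re α > 0` it differs from `1` by at most `4|P|⁻²`. Hence the product converges
locally uniformly there, so derivatives pass to the limit, and because every factor is `1` at
`r`, the derivative of the product at `r` is the sum of the derivatives of the factors, each of
which is computed explicitly.
-/

section ProductDerivative

variable {ι : Type*} {f : ι → ℂ → ℂ} {g : ℂ → ℂ} {U : Set ℂ}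

theorem HasProdLocallyUniformlyOn.differentiableOn (hfg : HasProdLocallyUniformlyOn f g U)
    (hU : IsOpen U) (hf : ∀ i, DifferentiableOn ℂ (f i) U) : DifferentiableOn ℂ g U := by
  classical
  exact TendstoLocallyUniformlyOn.differentiableOn hfg
    (.of_forall fun s ↦ DifferentiableOn.fun_finsetProd fun i _ ↦ hf i) hU

theorem HasProdLocallyUniformlyOn.hasSum_deriv_of_eq_one {x : ℂ}
    (hfg : HasProdLocallyUniformlyOn f g U) (hU : IsOpen U)
    (hf : ∀ i, DifferentiableOn ℂ (f i) U) (hx : x ∈ U) (hfx : ∀ i, f i x = 1) :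
    HasSum (fun i ↦ deriv (f i) x) (deriv g x) := by
  classical
  have hprod : ∀ s : Finset ι, DifferentiableOn ℂ (∏ i ∈ s, f i ·) U := fun s ↦
    DifferentiableOn.fun_finsetProd fun i _ ↦ hf i
  refine ((hfg.deriv (.of_forall hprod) hU).tendsto_at hx).congr fun s ↦ ?_
  have hd : ∀ i ∈ s, HasDerivAt (f i) (deriv (f i) x) x := fun i _ ↦
    ((hf i).differentiableAt (hU.mem_nhds hx)).hasDerivAt
  simp [(HasDerivAt.fun_finsetProd hd).deriv, hfx]

end ProductDerivative

open Complex

noncomputable section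

def localFactor (t : ℝ) (a g : ℂ) : ℂ :=
  (1 - cexp (-(1 + a + g) * t))⁻¹ *
    (1 - ((Real.exp t : ℂ) + 1)⁻¹ * cexp (-(1 + 2 * a) * t) -
      ((Real.exp t : ℂ) + 1)⁻¹ * cexp (-(a + g) * t))

def eulerTerm (t : ℝ) (r : ℂ) : ℂ :=
  t / ((cexp ((1 + 2 * r) * t) - 1) * ((Real.exp t : ℂ) + 1))

end

section LocalFactor

variable {t : ℝ} {a g r z : ℂ}

lemma norm_cexp_neg_mul_ofReal (z : ℂ) (t : ℝ) :
    ‖cexp (-z * t)‖ = Real.exp (-(z.re * t)) := by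
  simp [Complex.norm_exp]

lemma norm_cexp_neg_mul_ofReal_le_one (hz : 0 ≤ z.re) (ht : 0 ≤ t) :
    ‖cexp (-z * t)‖ ≤ 1 := by
  rw [norm_cexp_neg_mul_ofReal, Real.exp_le_one_iff, neg_nonpos]
  positivity

lemma one_sub_cexp_neg_mul_ne_zero (hz : 0 < z.re) (ht : 0 < t) : 1 - cexp (-z * t) ≠ 0 := by
  refine sub_ne_zero.2 fun h ↦ ?_
  have := norm_cexp_neg_mul_ofReal z t
  rw [← h, norm_one, eq_comm, Real.exp_eq_one_iff, neg_eq_zero] at this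
  exact (mul_pos hz ht).ne' this

lemma cexp_neg_one_add_mul (z : ℂ) (t : ℝ) :
    cexp (-(1 + z) * t) = (Real.exp t : ℂ)⁻¹ * cexp (-z * t) := by
  rw [ofReal_exp, ← Complex.exp_neg, ← Complex.exp_add]
  ring_nf

lemma ofReal_exp_add_one_ne_zero (t : ℝ) : (Real.exp t : ℂ) + 1 ≠ 0 := by
  exact_mod_cast (by positivity : Real.exp t + 1 ≠ 0)

lemma localFactor_sub_one (hu : 1 - cexp (-(1 + a + g) * t) ≠ 0) :
    localFactor t a g - 1 = (cexp (-(a + g) * t) - cexp (-(2 * a) * t)) /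
      ((1 - (Real.exp t : ℂ)⁻¹ * cexp (-(a + g) * t)) *
        (Real.exp t * (Real.exp t + 1) : ℝ)) := by
  have hN : (Real.exp t : ℂ) ≠ 0 := ofReal_ne_zero.2 (Real.exp_pos t).ne'
  have hN1 := ofReal_exp_add_one_ne_zero t
  rw [add_assoc, cexp_neg_one_add_mul] at hu
  rw [localFactor, add_assoc, cexp_neg_one_add_mul, cexp_neg_one_add_mul, ofReal_mul, ofReal_add,
    ofReal_one]
  generalize (Real.exp t : ℂ) = N at *
  generalize cexp (-(a + g) * t) = E at *
  have hu' : N - E ≠ 0 := by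
    rwa [← mul_ne_zero_iff_left hN, mul_sub, mul_inv_cancel_left₀ hN, mul_one] at hu
  field_simp
  ring

lemma norm_localFactor_sub_one_le (hN : 2 ≤ Real.exp t) (ha : 0 ≤ a.re) (hg : 0 ≤ g.re) :
    ‖localFactor t a g - 1‖ ≤ 4 * Real.exp (-(2 * t)) := by
  have ht : 0 < t := by
    rw [← Real.exp_lt_exp, Real.exp_zero]; linarith
  have hag : 0 ≤ (a + g).re := by simp only [add_re]; linarith
  have hne := one_sub_cexp_neg_mul_ne_zero (z := 1 + a + g)
    (by simp only [add_re, one_re]; linarith) ht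
  set N := Real.exp t
  have h3 := norm_cexp_neg_mul_ofReal_le_one hag ht.le
  have h4 := norm_cexp_neg_mul_ofReal_le_one (z := 2 * a)
    (by simp only [mul_re, re_ofNat, im_ofNat, zero_mul, sub_zero]; linarith) ht.le
  have hu : 1 / 2 ≤ ‖1 - (N : ℂ)⁻¹ * cexp (-(a + g) * t)‖ := by
    have : ‖(N : ℂ)⁻¹ * cexp (-(a + g) * t)‖ ≤ 1 / 2 := by
      rw [norm_mul, norm_inv, norm_real, Real.norm_of_nonneg (Real.exp_pos t).le]
      calc N⁻¹ * _ ≤ 2⁻¹ * 1 := by gcongr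
        _ = 1 / 2 := by norm_num
    calc (1 : ℝ) / 2 ≤ ‖(1 : ℂ)‖ - ‖(N : ℂ)⁻¹ * cexp (-(a + g) * t)‖ := by
          rw [norm_one]; linarith
      _ ≤ _ := norm_sub_norm_le _ _
  rw [localFactor_sub_one hne, norm_div, norm_mul, norm_real,
    Real.norm_of_nonneg (by positivity)]
  calc _ ≤ 2 / (1 / 2 * (N * N)) := by
        gcongr
        · exact (norm_sub_le _ _).trans (by linarith)
        · linarith
    _ = 4 * Real.exp (-(2 * t)) := by
        rw [Real.exp_neg, two_mul, Real.exp_add]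
        ring

lemma localFactor_self (ht : 0 < t) (hr : 0 ≤ r.re) : localFactor t r r = 1 := by
  have hY := one_sub_cexp_neg_mul_ne_zero (z := 1 + 2 * r)
    (by simp only [add_re, one_re, mul_re, re_ofNat, im_ofNat, zero_mul, sub_zero]; linarith) ht
  have hN1 := ofReal_exp_add_one_ne_zero t
  have h3 : cexp (-(r + r) * t) = Real.exp t * cexp (-(1 + 2 * r) * t) := by
    rw [ofReal_exp, ← Complex.exp_add]; ring_nf
  rw [localFactor, show 1 + r + r = 1 + 2 * r by ring, h3]
  generalize cexp (-(1 + 2 * r) * t) = Y at *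
  field_simp
  ring

lemma hasDerivAt_cexp_neg_affine_mul (p k : ℂ) (t : ℝ) (x : ℂ) :
    HasDerivAt (fun a : ℂ ↦ cexp (-(p + k * a) * t))
      (cexp (-(p + k * x) * t) * -(k * t)) x := by
  refine HasDerivAt.cexp ?_
  simpa using (((hasDerivAt_id x).const_mul k).const_add p).neg.mul_const (t : ℂ)

lemma differentiableAt_localFactor (hu : 1 - cexp (-(1 + a + g) * t) ≠ 0) :
    DifferentiableAt ℂ (localFactor t · g) a := by
  unfold localFactor
  fun_prop (disch := assumption)

lemma hasDerivAt_localFactor (ht : 0 < t) (hr : 0 ≤ r.re) :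
    HasDerivAt (localFactor t · r) (eulerTerm t r) r := by
  have hform : (localFactor t · r) = fun a ↦ (1 - cexp (-((1 + r) + 1 * a) * t))⁻¹ *
      (1 - ((Real.exp t : ℂ) + 1)⁻¹ * cexp (-(1 + 2 * a) * t) -
        ((Real.exp t : ℂ) + 1)⁻¹ * cexp (-(r + 1 * a) * t)) := by
    funext a
    simp only [localFactor]
    ring_nf
  have hY := one_sub_cexp_neg_mul_ne_zero (z := 1 + 2 * r)
    (by simp only [add_re, one_re, mul_re, re_ofNat, im_ofNat, zero_mul, sub_zero]; linarith) ht
  have hX : cexp ((1 + 2 * r) * t) = (cexp (-(1 + 2 * r) * t))⁻¹ := by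
    rw [← Complex.exp_neg, neg_mul, neg_neg]
  have h3 : cexp (-(r + 1 * r) * t) = Real.exp t * cexp (-(1 + 2 * r) * t) := by
    rw [ofReal_exp, ← Complex.exp_add]; ring_nf
  have h1 : cexp (-(1 + r + 1 * r) * t) = cexp (-(1 + 2 * r) * t) := by ring_nf
  rw [hform]
  set m : ℂ := (Real.exp t : ℂ) + 1 with hm
  refine ((((hasDerivAt_cexp_neg_affine_mul (1 + r) 1 t r).const_sub 1).inv (by rwa [h1])).mul
    ((((hasDerivAt_cexp_neg_affine_mul 1 2 t r).const_mul m⁻¹).const_sub 1).sub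
      ((hasDerivAt_cexp_neg_affine_mul r 1 t r).const_mul m⁻¹))).congr_deriv ?_
  simp only [Pi.inv_apply, Pi.sub_apply]
  rw [eulerTerm, hX, h3, h1, ← hm]
  have hm0 : m ≠ 0 := ofReal_exp_add_one_ne_zero t
  have hY0 := Complex.exp_ne_zero (-(1 + 2 * r) * t)
  generalize cexp (-(1 + 2 * r) * t) = Y at *
  field_simp
  ring

end LocalFactor

section Polynomials

open Polynomial

variable {Fq : Type*} [Field Fq] [Fintype Fq]

noncomputable def logNorm (P : Fq[X]) : ℝ := P.natDegree * Real.log (Fintype.card Fq)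

lemma exp_logNorm (P : Fq[X]) : Real.exp (logNorm P) = (Fintype.card Fq : ℝ) ^ P.natDegree := by
  rw [logNorm, Real.exp_nat_mul, Real.exp_log (by exact_mod_cast Fintype.card_pos)]

lemma two_le_exp_logNorm {P : Fq[X]} (hP : 0 < P.natDegree) : 2 ≤ Real.exp (logNorm P) := by
  have hq : (2 : ℝ) ≤ Fintype.card Fq := by exact_mod_cast Fintype.one_lt_card
  rw [exp_logNorm]
  calc (2 : ℝ) ≤ Fintype.card Fq := hq
    _ ≤ _ := le_self_pow₀ (by linarith) hP.ne'

lemma logNorm_pos {P : Fq[X]} (hP : 0 < P.natDegree) : 0 < logNorm P := by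
  have := two_le_exp_logNorm hP
  rw [← Real.exp_lt_exp, Real.exp_zero]
  linarith

lemma ADlocal_eq_localFactor (a g : ℂ) (P : Fq[X]) :
    ADlocal Fq a g P = localFactor (logNorm P) a g := by
  simp only [ADlocal, localFactor, exp_logNorm]
  simp only [logNorm, ofReal_mul, ofReal_natCast]

lemma eulerTerm_logNorm (r : ℂ) (P : Fq[X]) : eulerTerm (logNorm P) r =
    (((P.natDegree : ℝ) * Real.log (Fintype.card Fq) : ℝ) : ℂ) /
      ((cexp ((1 + 2 * r) * ((P.natDegree : ℂ) * Real.log (Fintype.card Fq))) - 1) *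
        ((((Fintype.card Fq : ℝ) ^ P.natDegree : ℝ) : ℂ) + 1)) := by
  simp only [eulerTerm, exp_logNorm]
  simp only [logNorm, ofReal_mul, ofReal_natCast]

lemma card_filter_natDegree_eq_le (s : Finset Fq[X]) (d : ℕ) :
    (s.filter (·.natDegree = d)).card ≤ Fintype.card Fq ^ (d + 1) := by
  calc (s.filter (·.natDegree = d)).card
      ≤ (Finset.univ : Finset (Fin (d + 1) → Fq)).card := by
        refine Finset.card_le_card_of_injOn (fun P i ↦ P.coeff i)
          (fun _ _ ↦ Finset.mem_univ _) ?_
        intro P hP Q hQ h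
        rw [Finset.mem_coe, Finset.mem_filter] at hP hQ
        ext m
        by_cases hm : m < d + 1
        · exact congr_fun h ⟨m, hm⟩
        · rw [coeff_eq_zero_of_natDegree_lt (by omega), coeff_eq_zero_of_natDegree_lt (by omega)]
    _ = Fintype.card Fq ^ (d + 1) := by simp

lemma summable_comp_natDegree {F : ℕ → ℝ} (hF0 : ∀ d, 0 ≤ F d)
    (hF : Summable fun d ↦ (Fintype.card Fq : ℝ) ^ (d + 1) * F d) :
    Summable fun P : Fq[X] ↦ F P.natDegree := by
  classical
  refine summable_of_sum_le (c := ∑' d, (Fintype.card Fq : ℝ) ^ (d + 1) * F d)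
    (fun P ↦ hF0 _) fun s ↦ ?_
  rw [Finset.sum_comp]
  refine (Finset.sum_le_sum fun d _ ↦ ?_).trans
    (hF.sum_le_tsum _ fun d _ ↦ mul_nonneg (by positivity) (hF0 d))
  rw [nsmul_eq_mul]
  gcongr
  · exact hF0 d
  · exact_mod_cast card_filter_natDegree_eq_le s d

lemma summable_exp_neg_mul_logNorm {σ : ℝ} (hσ : 1 < σ) :
    Summable fun P : Fq[X] ↦ Real.exp (-(σ * logNorm P)) := by
  set L := Real.log (Fintype.card Fq)
  have hL : 0 < L := Real.log_pos (by exact_mod_cast Fintype.one_lt_card)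
  have hqL : Real.exp L = Fintype.card Fq := Real.exp_log (by exact_mod_cast Fintype.card_pos)
  refine summable_comp_natDegree (F := fun d ↦ Real.exp (-(σ * (d * L))))
    (fun _ ↦ by positivity) ?_
  have hgeom : ∀ d : ℕ, (Fintype.card Fq : ℝ) ^ (d + 1) * Real.exp (-(σ * (d * L))) =
      Fintype.card Fq * Real.exp ((1 - σ) * L) ^ d := by
    intro d
    rw [← hqL, ← Real.exp_nat_mul, ← Real.exp_nat_mul, ← Real.exp_add, ← Real.exp_add]
    push_cast
    ring_nf
  simp only [hgeom]
  refine (summable_geometric_of_lt_one (by positivity) ?_).mul_left _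
  rw [Real.exp_lt_one_iff]
  nlinarith

end Polynomials

section EulerProduct

open Polynomial

variable {Fq : Type*} [Field Fq] [Fintype Fq] {r : ℂ}

lemma differentiableOn_localFactor_logNorm (hr : 0 ≤ r.re)
    (P : {P : Fq[X] // P.Monic ∧ Irreducible P}) :
    DifferentiableOn ℂ (localFactor (logNorm P.1) · r) {a | 0 < a.re} := fun a ha ↦
  (differentiableAt_localFactor <| one_sub_cexp_neg_mul_ne_zero
    (by simp only [add_re, one_re]; linarith [ha.out])
    (logNorm_pos P.2.2.natDegree_pos)).differentiableWithinAt

lemma hasProdLocallyUniformlyOn_localFactor_logNorm (hr : 0 ≤ r.re) :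
    HasProdLocallyUniformlyOn (fun (P : {P : Fq[X] // P.Monic ∧ Irreducible P}) a ↦
      localFactor (logNorm P.1) a r) (AD Fq · r) {a | 0 < a.re} := by
  have hU : IsOpen {a : ℂ | 0 < a.re} := isOpen_lt continuous_const continuous_re
  have h := Summable.hasProdLocallyUniformlyOn_one_add hU
    (((summable_exp_neg_mul_logNorm (Fq := Fq) one_lt_two).subtype _).mul_left 4)
    (.of_forall fun P a ha ↦ norm_localFactor_sub_one_le
      (two_le_exp_logNorm P.2.2.natDegree_pos) (le_of_lt ha) hr)
    fun P ↦ (differentiableOn_localFactor_logNorm hr P).continuousOn.sub continuousOn_const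
  simpa only [add_sub_cancel, AD, ADlocal_eq_localFactor] using h

end EulerProduct

theorem stmt_18_general {Fq : Type*} [Field Fq] [Fintype Fq]
    (r : ℂ) (hr : 0 < r.re) :
    Summable (fun P : {P : Polynomial Fq // P.Monic ∧ Irreducible P} =>
      (((P.1.natDegree : ℝ) * Real.log (Fintype.card Fq) : ℝ) : ℂ) /
        ((Complex.exp ((1 + 2 * r) * ((P.1.natDegree : ℂ) * Real.log (Fintype.card Fq))) - 1) *
          ((((Fintype.card Fq : ℝ) ^ P.1.natDegree : ℝ) : ℂ) + 1))) ∧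
    HasDerivAt (fun a : ℂ => AD Fq a r)
      (∑' P : {P : Polynomial Fq // P.Monic ∧ Irreducible P},
        (((P.1.natDegree : ℝ) * Real.log (Fintype.card Fq) : ℝ) : ℂ) /
          ((Complex.exp ((1 + 2 * r) * ((P.1.natDegree : ℂ) * Real.log (Fintype.card Fq))) - 1) *
            ((((Fintype.card Fq : ℝ) ^ P.1.natDegree : ℝ) : ℂ) + 1)))
      r := by
  have hU : IsOpen {a : ℂ | 0 < a.re} := isOpen_lt continuous_const continuous_re
  have hprod := hasProdLocallyUniformlyOn_localFactor_logNorm (Fq := Fq) hr.le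
  have hdiff := differentiableOn_localFactor_logNorm (Fq := Fq) hr.le
  have hpos (P : {P : Polynomial Fq // P.Monic ∧ Irreducible P}) : 0 < logNorm P.1 :=
    logNorm_pos P.2.2.natDegree_pos
  have hsum := hprod.hasSum_deriv_of_eq_one hU hdiff hr fun P ↦ localFactor_self (hpos P) hr.le
  simp only [fun P ↦ (hasDerivAt_localFactor (hpos P) hr.le).deriv, eulerTerm_logNorm] at hsum
  refine ⟨hsum.summable, hsum.tsum_eq ▸ ?_⟩
  exact ((hprod.differentiableOn hU hdiff).differentiableAt (hU.mem_nhds hr)).hasDerivAt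

/-- for `Re(r) > 0`, `∂A_D/∂α` at `α = γ = r` equals
`Σ_P log|P| / ((|P|^{1+2r} − 1)(|P|+1))`, the series converging absolutely;
here `log|P| = deg P · log q`. -/
theorem stmt_18 {Fq : Type*} [Field Fq] [Fintype Fq] (hq : Odd (Fintype.card Fq))
    (r : ℂ) (hr : 0 < r.re) :
    Summable (fun P : {P : Polynomial Fq // P.Monic ∧ Irreducible P} =>
      (((P.1.natDegree : ℝ) * Real.log (Fintype.card Fq) : ℝ) : ℂ) /
        ((Complex.exp ((1 + 2 * r) * ((P.1.natDegree : ℂ) * Real.log (Fintype.card Fq))) - 1) *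
          ((((Fintype.card Fq : ℝ) ^ P.1.natDegree : ℝ) : ℂ) + 1))) ∧
    HasDerivAt (fun a : ℂ => AD Fq a r)
      (∑' P : {P : Polynomial Fq // P.Monic ∧ Irreducible P},
        (((P.1.natDegree : ℝ) * Real.log (Fintype.card Fq) : ℝ) : ℂ) /
          ((Complex.exp ((1 + 2 * r) * ((P.1.natDegree : ℂ) * Real.log (Fintype.card Fq))) - 1) *
            ((((Fintype.card Fq : ℝ) ^ P.1.natDegree : ℝ) : ℂ) + 1)))
      r :=
  stmt_18_general r hr
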